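/- Every monomial ideal I of A[ℝ≥0^d] equals the (possibly infinite) intersection ⋂ J_{r,1} taken over all monomials X^r ∉ I, where J_{r,1} = ({X_i^{s} : 1≤i≤d, s > r_i})R; in particular every monomial ideal admits a (possibly infinite) m-irreducible decomposition. -/

import Mathlib

open scoped NNReal ENNReal

/-- The semigroup ring `R = A[ℝ≥0 ^ d]`. -/
abbrev SemiRng (A : Type*) [CommRing A] (d : ℕ) : Type _ :=
  AddMonoidAlgebra A (Fin d → ℝ≥0)

/-- The monomial `X^r` of `A[ℝ≥0 ^ d]`. -/
noncomputable def mono (A : Type*) [CommRing A] {d : ℕ} (r : Fin d → ℝ≥0) : SemiRng A d :=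
  AddMonoidAlgebra.single r 1

/-- An ideal of `A[ℝ≥0 ^ d]` is a monomial ideal if it is generated by a set of monomials. -/
def IsMonomialIdeal {A : Type*} [CommRing A] {d : ℕ} (I : Ideal (SemiRng A d)) : Prop :=
  ∃ E : Set (Fin d → ℝ≥0), I = Ideal.span (mono A '' E)

/-- The set of (exponent vectors of) monomials contained in an ideal. -/
def monSet (A : Type*) [CommRing A] {d : ℕ} (I : Ideal (SemiRng A d)) :
    Set (Fin d → ℝ≥0) :=
  {r | mono A r ∈ I}

/-- `geq e r a` means `r ≥_e a`: `r ≥ a` if `e = 0` (false), `r > a` if `e = 1` (true);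
no finite `r` satisfies `r ≥_e ∞`. -/
def geq (e : Bool) (r : ℝ≥0) (a : ℝ≥0∞) : Prop :=
  if e then a < (r : ℝ≥0∞) else a ≤ (r : ℝ≥0∞)

/-- The ideal `J_{i,a,e}` generated by the pure powers `X_i^r` with `r ≥_e a`. -/
noncomputable def Jsingle (A : Type*) [CommRing A] {d : ℕ} (i : Fin d) (a : ℝ≥0∞)
    (e : Bool) : Ideal (SemiRng A d) :=
  Ideal.span {f | ∃ r : ℝ≥0, geq e r a ∧ f = mono A (Pi.single i r)}

/-- The ideal `J_{a,e}` generated by all pure powers `X_i^r` with `r ≥_{e i} a i`. -/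
noncomputable def Jideal (A : Type*) [CommRing A] {d : ℕ} (a : Fin d → ℝ≥0∞)
    (e : Fin d → Bool) : Ideal (SemiRng A d) :=
  Ideal.span {f | ∃ (i : Fin d) (r : ℝ≥0), geq (e i) r (a i) ∧ f = mono A (Pi.single i r)}

/-- The ideal `I_{a,e}` generated by all monomials `X^r` with `r i ≥_{e i} a i` for all `i`. -/
noncomputable def Iideal (A : Type*) [CommRing A] {d : ℕ} (a : Fin d → ℝ≥0∞)
    (e : Fin d → Bool) : Ideal (SemiRng A d) :=
  Ideal.span {f | ∃ r : Fin d → ℝ≥0, (∀ i, geq (e i) (r i) (a i)) ∧ f = mono A r}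

/-- A monomial ideal is m-irreducible if whenever it is an intersection of two monomial
ideals, it equals one of them. -/
def MIrred {A : Type*} [CommRing A] {d : ℕ} (I : Ideal (SemiRng A d)) : Prop :=
  ∀ J K : Ideal (SemiRng A d), IsMonomialIdeal J → IsMonomialIdeal K →
    I = J ⊓ K → I = J ∨ I = K


/-! The monomials contained in a monomial ideal `I` form an up-set of `ℝ≥0^d`, and they
determine `I`. The monomials of `J_{r,1}` are the `X^u` with `u ≰ r`, so `X^u` lies in every
`J_{r,1}` with `X^r ∉ I` iff no `r ≥ u` has `X^r ∉ I`, i.e. iff `X^u ∈ I`. For m-irreducibility,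
the monomials outside `J_{a,e}` are those failing the condition in every coordinate, a set closed
under `⊔`: if `J_{a,e} = J ⊓ K` with `X^u ∈ J` and `X^v ∈ K` both outside `J_{a,e}`, then
`X^(u ⊔ v) ∈ J ⊓ K` lies outside it as well. -/

namespace SemiRng

variable {A : Type*} [CommRing A] {d : ℕ}

lemma mono_mul_mono (u v : Fin d → ℝ≥0) : mono A u * mono A v = mono A (u + v) := by
  rw [mono, mono, AddMonoidAlgebra.single_mul_single, mul_one]
  rfl

lemma mono_mem_of_le {I : Ideal (SemiRng A d)} {u v : Fin d → ℝ≥0} (hu : mono A u ∈ I)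
    (huv : u ≤ v) : mono A v ∈ I := by
  obtain ⟨w, rfl⟩ := le_iff_exists_add.mp huv
  rw [← mono_mul_mono]
  exact I.mul_mem_right _ hu

lemma mem_of_forall_mono_mem {I : Ideal (SemiRng A d)} {f : SemiRng A d}
    (hf : ∀ u ∈ f.coeff.support, mono A u ∈ I) : f ∈ I := by
  rw [← AddMonoidAlgebra.sum_coeff_single f]
  refine Submodule.sum_mem _ fun u hu => ?_
  have hsplit : (AddMonoidAlgebra.single u (f.coeff u) : SemiRng A d) =
      AddMonoidAlgebra.single 0 (f.coeff u) * mono A u := by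
    rw [mono, AddMonoidAlgebra.single_mul_single, mul_one, zero_add]
  rw [hsplit]
  exact I.mul_mem_left _ (hf u hu)

lemma exists_le_of_mem_span_mono {E : Set (Fin d → ℝ≥0)} {f : SemiRng A d}
    (hf : f ∈ Ideal.span (mono A '' E)) : ∀ u ∈ f.coeff.support, ∃ e ∈ E, e ≤ u := by
  classical
  induction hf using Submodule.span_induction with
  | mem x hx =>
    obtain ⟨e, he, rfl⟩ := hx
    intro u hu
    rw [Finset.mem_singleton.mp (Finsupp.support_single_subset hu)]
    exact ⟨e, he, le_rfl⟩
  | zero => simp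
  | add x y _ _ hx hy =>
    intro u hu
    exact (Finset.mem_union.mp (Finsupp.support_add hu)).elim (hx u) (hy u)
  | smul a x _ hx =>
    intro u hu
    obtain ⟨b, -, c, hc, rfl⟩ :=
      Finset.mem_add.mp (AddMonoidAlgebra.support_coeff_mul_subset a x hu)
    obtain ⟨e, he, hec⟩ := hx c hc
    exact ⟨e, he, hec.trans le_add_self⟩

lemma mono_mem_span_mono_iff [Nontrivial A] {E : Set (Fin d → ℝ≥0)} {u : Fin d → ℝ≥0} :
    mono A u ∈ Ideal.span (mono A '' E) ↔ ∃ e ∈ E, e ≤ u := by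
  refine ⟨fun hu => exists_le_of_mem_span_mono hu u ?_, fun ⟨e, he, heu⟩ => ?_⟩
  · exact (Finsupp.mem_support_single u u 1).2 ⟨rfl, one_ne_zero⟩
  · exact mono_mem_of_le (Ideal.subset_span ⟨e, he, rfl⟩) heu

end SemiRng

namespace IsMonomialIdeal

open SemiRng

variable {A : Type*} [CommRing A] {d : ℕ} {I J : Ideal (SemiRng A d)}

lemma mem_iff (hI : IsMonomialIdeal I) {f : SemiRng A d} :
    f ∈ I ↔ ∀ u ∈ f.coeff.support, mono A u ∈ I := by
  refine ⟨fun hf u hu => ?_, mem_of_forall_mono_mem⟩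
  obtain ⟨E, rfl⟩ := hI
  obtain ⟨e, he, heu⟩ := exists_le_of_mem_span_mono hf u hu
  exact mono_mem_of_le (Ideal.subset_span ⟨e, he, rfl⟩) heu

lemma le_iff_monSet_subset (hI : IsMonomialIdeal I) (hJ : IsMonomialIdeal J) :
    I ≤ J ↔ monSet A I ⊆ monSet A J :=
  ⟨fun h _ hu => h hu, fun h _ hf => hJ.mem_iff.2 fun u hu => h (hI.mem_iff.1 hf u hu)⟩

lemma exists_mono_mem_not_mem_of_lt (hI : IsMonomialIdeal I) (hJ : IsMonomialIdeal J)
    (hIJ : I < J) : ∃ u, mono A u ∈ J ∧ mono A u ∉ I := by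
  have hJI : ¬J ≤ I := hIJ.not_ge
  rwa [hJ.le_iff_monSet_subset hI, Set.not_subset] at hJI

end IsMonomialIdeal

section Jideal

open SemiRng

variable {A : Type*} [CommRing A] {d : ℕ}

lemma geq_of_le {e : Bool} {a : ℝ≥0∞} {r s : ℝ≥0} (h : geq e r a) (hrs : r ≤ s) : geq e s a := by
  have hrs' : (r : ℝ≥0∞) ≤ s := ENNReal.coe_le_coe.mpr hrs
  cases e
  · exact (h : a ≤ r).trans hrs'
  · exact (h : a < r).trans_le hrs'

lemma Jideal_eq_span (a : Fin d → ℝ≥0∞) (e : Fin d → Bool) :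
    Jideal A a e = Ideal.span (mono A '' {u | ∃ i r, geq (e i) r (a i) ∧ u = Pi.single i r}) := by
  rw [Jideal]
  congr 1
  ext f
  constructor
  · rintro ⟨i, r, hr, rfl⟩
    exact ⟨Pi.single i r, ⟨i, r, hr, rfl⟩, rfl⟩
  · rintro ⟨u, ⟨i, r, hr, rfl⟩, rfl⟩
    exact ⟨i, r, hr, rfl⟩

lemma isMonomialIdeal_Jideal (a : Fin d → ℝ≥0∞) (e : Fin d → Bool) :
    IsMonomialIdeal (Jideal A a e) :=
  ⟨_, Jideal_eq_span a e⟩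

lemma mono_mem_Jideal_iff [Nontrivial A] {a : Fin d → ℝ≥0∞} {e : Fin d → Bool}
    {u : Fin d → ℝ≥0} : mono A u ∈ Jideal A a e ↔ ∃ i, geq (e i) (u i) (a i) := by
  rw [Jideal_eq_span, mono_mem_span_mono_iff]
  constructor
  · rintro ⟨_, ⟨i, r, hr, rfl⟩, hle⟩
    exact ⟨i, geq_of_le hr (by simpa using hle i)⟩
  · rintro ⟨i, hi⟩
    refine ⟨Pi.single i (u i), ⟨i, u i, hi, rfl⟩, fun j => ?_⟩
    rcases eq_or_ne j i with rfl | hji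
    · simp
    · simp [Pi.single_eq_of_ne hji]

lemma mono_mem_Jideal_true_iff [Nontrivial A] {r u : Fin d → ℝ≥0} :
    mono A u ∈ Jideal A (fun i => (r i : ℝ≥0∞)) (fun _ => true) ↔ ¬u ≤ r := by
  simp [mono_mem_Jideal_iff, geq, Pi.le_def]

lemma mIrred_Jideal [Nontrivial A] (a : Fin d → ℝ≥0∞) (e : Fin d → Bool) :
    MIrred (Jideal A a e) := by
  have exists_mono_mem_of_lt {L : Ideal (SemiRng A d)} (hL : IsMonomialIdeal L)
      (hlt : Jideal A a e < L) : ∃ u, mono A u ∈ L ∧ ∀ i, ¬geq (e i) (u i) (a i) := by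
    obtain ⟨u, huL, huJ⟩ := (isMonomialIdeal_Jideal a e).exists_mono_mem_not_mem_of_lt hL hlt
    exact ⟨u, huL, not_exists.mp (mt mono_mem_Jideal_iff.mpr huJ)⟩
  intro J K hJ hK hJK
  by_contra! hne
  obtain ⟨u, huJ, hu⟩ := exists_mono_mem_of_lt hJ ((hJK ▸ inf_le_left).lt_of_ne hne.1)
  obtain ⟨v, hvK, hv⟩ := exists_mono_mem_of_lt hK ((hJK ▸ inf_le_right).lt_of_ne hne.2)
  have huv : mono A (u ⊔ v) ∈ Jideal A a e :=
    hJK ▸ ⟨mono_mem_of_le huJ le_sup_left, mono_mem_of_le hvK le_sup_right⟩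
  obtain ⟨i, hi⟩ := mono_mem_Jideal_iff.mp huv
  rcases le_total (u i) (v i) with h | h
  · exact hv i (by rwa [Pi.sup_apply, sup_eq_right.mpr h] at hi)
  · exact hu i (by rwa [Pi.sup_apply, sup_eq_left.mpr h] at hi)

lemma IsMonomialIdeal.eq_iInf_Jideal [Nontrivial A] {I : Ideal (SemiRng A d)}
    (hI : IsMonomialIdeal I) :
    I = ⨅ (r : Fin d → ℝ≥0) (_ : mono A r ∉ I),
      Jideal A (fun i => (r i : ℝ≥0∞)) (fun _ => true) := by
  refine le_antisymm (le_iInf₂ fun r hr => ?_) fun f hf => hI.mem_iff.2 fun u hu => ?_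
  · refine (hI.le_iff_monSet_subset (isMonomialIdeal_Jideal _ _)).2 fun u hu => ?_
    exact mono_mem_Jideal_true_iff.2 fun hur => hr (mono_mem_of_le hu hur)
  · by_contra hu'
    have hfu : f ∈ Jideal A (fun i => (u i : ℝ≥0∞)) (fun _ => true) :=
      (Submodule.mem_iInf _).1 ((Submodule.mem_iInf _).1 hf u) hu'
    exact mono_mem_Jideal_true_iff.1 ((isMonomialIdeal_Jideal _ _).mem_iff.1 hfu u hu) le_rfl

end Jideal

variable {A : Type*} [CommRing A] [Nontrivial A] {d : ℕ}

theorem stmt19 (I : Ideal (SemiRng A d)) (hI : IsMonomialIdeal I) :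
    I = (⨅ (r : Fin d → ℝ≥0) (_ : mono A r ∉ I),
          Jideal A (fun i => (r i : ℝ≥0∞)) (fun _ => true)) ∧
      ∀ r : Fin d → ℝ≥0,
        MIrred (Jideal A (fun i => (r i : ℝ≥0∞)) (fun _ => true)) :=
  ⟨hI.eq_iInf_Jideal, fun _ => mIrred_Jideal _ _⟩
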